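/- Let n = 2k with k ≥ 1 and let X be an n×n complex cross matrix. Then the characteristic polynomial of X factors as det(λI − X) = ∏_{i=0}^{k-1} ( (λ − X i i)(λ − X (n-1-i) (n-1-i)) − X i (n-1-i) · X (n-1-i) i ), as an identity of polynomials in λ. -/

import Mathlib

open Polynomial

def crossEquiv (k : ℕ) (hk : 1 ≤ k) : Fin 2 × Fin k ≃ Fin (2 * k) where
  toFun p := if (p.1 : ℕ) = 0 then ⟨p.2, by omega⟩ else ⟨2 * k - 1 - p.2, by omega⟩
  invFun a := if h : (a : ℕ) < k then (0, ⟨a, h⟩) else (1, ⟨2 * k - 1 - a, by omega⟩)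
  left_inv p := by
    rcases p with ⟨j, i⟩
    fin_cases j <;> simp only
    · simp [dif_pos i.isLt]
    · simp only [Fin.mk_one, Fin.val_one, one_ne_zero, if_false]
      rw [dif_neg (by simp; omega)]
      exact Prod.ext rfl (Fin.ext (by simp; omega))
  right_inv a := by
    by_cases h : (a : ℕ) < k
    · simp only [dif_pos h]; simp
    · simp only [dif_neg h]; simp
      exact Fin.ext (by simp; omega)

lemma k_le_two_mul (k : ℕ) : k ≤ 2 * k := by omega

lemma det_cross {R : Type*} [CommRing R] (k : ℕ) (hk : 1 ≤ k)
    (M : Matrix (Fin (2 * k)) (Fin (2 * k)) R)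
    (hM : ∀ i j : Fin (2 * k), j ≠ i → (i : ℕ) + (j : ℕ) + 1 ≠ 2 * k → M i j = 0) :
    M.det = ∏ i : Fin k,
      (M (Fin.castLE (k_le_two_mul k) i) (Fin.castLE (k_le_two_mul k) i) *
        M (Fin.castLE (k_le_two_mul k) i).rev (Fin.castLE (k_le_two_mul k) i).rev -
       M (Fin.castLE (k_le_two_mul k) i) (Fin.castLE (k_le_two_mul k) i).rev *
        M (Fin.castLE (k_le_two_mul k) i).rev (Fin.castLE (k_le_two_mul k) i)) := by
  have e := crossEquiv k hk
  have key : M.submatrix (crossEquiv k hk) (crossEquiv k hk) =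
      Matrix.blockDiagonal (fun i : Fin k =>
        !![M (Fin.castLE (by omega) i) (Fin.castLE (by omega) i),
           M (Fin.castLE (by omega) i) (Fin.castLE (by omega) i).rev;
           M (Fin.castLE (by omega) i).rev (Fin.castLE (by omega) i),
           M (Fin.castLE (by omega) i).rev (Fin.castLE (by omega) i).rev]) := by
    ext ⟨j, i⟩ ⟨j', i'⟩
    have hi := i.isLt
    have hi' := i'.isLt
    by_cases hii : i = i'
    · subst hii
      fin_cases j <;> fin_cases j' <;>
        simp [crossEquiv, Matrix.blockDiagonal_apply, Fin.castLE, Fin.rev] <;>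
        congr 1 <;> exact Fin.ext (by simp; omega)
    · have hii' : (i : ℕ) ≠ (i' : ℕ) := fun h => hii (Fin.ext h)
      fin_cases j <;> fin_cases j' <;>
        simp [crossEquiv, Matrix.blockDiagonal_apply, hii, Ne.symm hii] <;>
        exact hM _ _ (fun h => absurd (congrArg Fin.val h) (by simp; omega)) (by simp; omega)
  have := Matrix.det_submatrix_equiv_self (crossEquiv k hk) M
  rw [← this, key, Matrix.det_blockDiagonal]
  refine Finset.prod_congr rfl fun i _ => ?_
  rw [Matrix.det_fin_two_of]

/-- An `n × n` complex matrix is a *cross matrix* if its nonzero entries lie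
only on the main diagonal and the anti-diagonal (0-based indices). -/
def IsCrossMatrix {n : ℕ} (X : Matrix (Fin n) (Fin n) ℂ) : Prop :=
  ∀ i j : Fin n, j ≠ i → (i : ℕ) + (j : ℕ) + 1 ≠ n → X i j = 0

/-- The characteristic polynomial `det (λ I - X)` of an even-order cross matrix
(`n = 2k`) factors into `k` quadratics.  Here for `i < k` the index `n - 1 - i`
is `(Fin.castLE _ i).rev`. -/
theorem crossMatrix_charpoly_even (k : ℕ) (hk : 1 ≤ k)
    (X : Matrix (Fin (2 * k)) (Fin (2 * k)) ℂ) (hX : IsCrossMatrix X) :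
    X.charpoly =
      ∏ i : Fin k,
        ((Polynomial.X - C (X (Fin.castLE (by omega) i) (Fin.castLE (by omega) i))) *
            (Polynomial.X -
              C (X (Fin.castLE (by omega) i).rev (Fin.castLE (by omega) i).rev)) -
          C (X (Fin.castLE (by omega) i) (Fin.castLE (by omega) i).rev) *
            C (X (Fin.castLE (by omega) i).rev (Fin.castLE (by omega) i))) := by
  rw [Matrix.charpoly]
  rw [det_cross k hk _ (fun i j hji hsum => by
    rw [Matrix.charmatrix_apply_ne _ _ _ (Ne.symm hji), hX i j hji hsum, map_zero, neg_zero])]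
  refine Finset.prod_congr rfl fun i _ => ?_
  have hne : (Fin.castLE (by omega : k ≤ 2 * k) i) ≠ (Fin.castLE (by omega : k ≤ 2 * k) i).rev := by
    have := i.isLt
    exact fun h => by have := congrArg Fin.val h; simp [Fin.val_rev] at this; omega
  rw [Matrix.charmatrix_apply_eq, Matrix.charmatrix_apply_eq,
    Matrix.charmatrix_apply_ne _ _ _ hne, Matrix.charmatrix_apply_ne _ _ _ (Ne.symm hne)]
  ring
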